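/- arXiv:2112.07709 — 9 statements merged into one kernel-verified Lean document; each statement's English description precedes it below -/
import Mathlib

section
/- Let G be a finite simple graph and let p₁,…,p_k be real numbers with 0 ≤ pᵢ ≤ 1 and ∑ pᵢ ≥ 1. Then there exists a k-coloring c of the vertices of G such that for every vertex v, the number of neighbors of v with the same color as v is at most p_{c(v)} · deg(v). -/
open Finset

section AuxPropColoring

variable {V : Type} [Fintype V] [DecidableEq V]
variable (G : SimpleGraph V) [DecidableRel G.Adj]
variable {k : ℕ} (p : Fin k → ℝ)

/-- weight of a monochromatic incidence -/
noncomputable def pcWeight (i m : Fin k) : ℝ := if i = m then 1 / p i else 0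

lemma pcWeight_symm (i m : Fin k) : pcWeight p i m = pcWeight p m i := by
  unfold pcWeight
  by_cases h : i = m
  · subst h; simp
  · rw [if_neg h, if_neg (Ne.symm h)]

/-- the potential function -/
noncomputable def pcPhi (c : V → Fin k) : ℝ :=
  ∑ v, ∑ w ∈ G.neighborFinset v, pcWeight p (c v) (c w)

lemma pc_sum_f (c : V → Fin k) (v : V) (j : Fin k) :
    ∑ w ∈ G.neighborFinset v, pcWeight p j (c w)
      = (((G.neighborFinset v).filter (fun u => c u = j)).card : ℝ) * (1 / p j) := by
  unfold pcWeight
  rw [← Finset.sum_filter]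
  rw [Finset.sum_const]
  rw [nsmul_eq_mul]
  congr 3
  apply Finset.filter_congr
  intro x _
  exact eq_comm

lemma pcPhi_update (c : V → Fin k) (v : V) (j : Fin k) :
    pcPhi G p (Function.update c v j)
      = pcPhi G p c + 2 * (∑ w ∈ G.neighborFinset v, pcWeight p j (c w)
          - ∑ w ∈ G.neighborFinset v, pcWeight p (c v) (c w)) := by
  classical
  set c' := Function.update c v j with hc'
  have hcv : c' v = j := Function.update_self v j c
  have hcw : ∀ w, w ≠ v → c' w = c w := fun w hw => Function.update_of_ne hw j c
  have hvnot : ∀ u, v ∉ G.neighborFinset u ∨ v ∈ G.neighborFinset u := fun u => by tauto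
  -- the inner sums
  have hA : ∀ u, u ≠ v →
      ∑ w ∈ G.neighborFinset u, pcWeight p (c' u) (c' w)
        = (∑ w ∈ G.neighborFinset u, pcWeight p (c u) (c w))
          + (if u ∈ G.neighborFinset v then pcWeight p (c u) j - pcWeight p (c u) (c v) else 0) := by
    intro u hu
    rw [hcw u hu]
    by_cases hv : v ∈ G.neighborFinset u
    · have huv : u ∈ G.neighborFinset v := by
        rw [SimpleGraph.mem_neighborFinset] at hv ⊢
        exact hv.symm
      rw [if_pos huv]
      rw [← Finset.add_sum_erase _ _ hv, ← Finset.add_sum_erase _ _ hv]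
      have : ∑ w ∈ (G.neighborFinset u).erase v, pcWeight p (c u) (c' w)
          = ∑ w ∈ (G.neighborFinset u).erase v, pcWeight p (c u) (c w) := by
        apply Finset.sum_congr rfl
        intro w hw
        rw [hcw w (Finset.ne_of_mem_erase hw)]
      rw [this, hcv]
      ring
    · have huv : u ∉ G.neighborFinset v := by
        rw [SimpleGraph.mem_neighborFinset] at hv ⊢
        exact fun h => hv h.symm
      rw [if_neg huv, add_zero]
      apply Finset.sum_congr rfl
      intro w hw
      have hwv : w ≠ v := by rintro rfl; exact hv hw
      rw [hcw w hwv]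
  have hAv : ∑ w ∈ G.neighborFinset v, pcWeight p (c' v) (c' w)
      = ∑ w ∈ G.neighborFinset v, pcWeight p j (c w) := by
    rw [hcv]
    apply Finset.sum_congr rfl
    intro w hw
    have hwv : w ≠ v := by
      rintro rfl
      exact (G.notMem_neighborFinset_self _) hw
    rw [hcw w hwv]
  unfold pcPhi
  have hsplit : ∀ (g : V → ℝ), ∑ u, g u = g v + ∑ u ∈ Finset.univ.erase v, g u :=
    fun g => (Finset.add_sum_erase _ g (Finset.mem_univ v)).symm
  rw [hsplit (fun u => ∑ w ∈ G.neighborFinset u, pcWeight p (c' u) (c' w)),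
      hsplit (fun u => ∑ w ∈ G.neighborFinset u, pcWeight p (c u) (c w))]
  rw [hAv]
  rw [Finset.sum_congr rfl (fun u hu => hA u (Finset.ne_of_mem_erase hu))]
  rw [Finset.sum_add_distrib]
  have hsub : G.neighborFinset v ⊆ Finset.univ.erase v := by
    intro u hu
    apply Finset.mem_erase.mpr
    refine ⟨?_, Finset.mem_univ u⟩
    rintro rfl
    exact (G.notMem_neighborFinset_self _) hu
  have : ∑ u ∈ Finset.univ.erase v,
      (if u ∈ G.neighborFinset v then pcWeight p (c u) j - pcWeight p (c u) (c v) else 0)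
      = ∑ u ∈ G.neighborFinset v, (pcWeight p (c u) j - pcWeight p (c u) (c v)) := by
    rw [Finset.sum_ite_mem]
    congr 1
    exact Finset.inter_eq_right.mpr hsub
  rw [this]
  have h1 : ∑ u ∈ G.neighborFinset v, (pcWeight p (c u) j - pcWeight p (c u) (c v))
      = ∑ w ∈ G.neighborFinset v, pcWeight p j (c w)
        - ∑ w ∈ G.neighborFinset v, pcWeight p (c v) (c w) := by
    rw [Finset.sum_sub_distrib]
    congr 1
    · exact Finset.sum_congr rfl fun w _ => pcWeight_symm p (c w) j
    · exact Finset.sum_congr rfl fun w _ => pcWeight_symm p (c w) (c v)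
  rw [h1]
  ring

end AuxPropColoring

theorem lemma_proportional_coloring
    (V : Type) [Fintype V] [DecidableEq V]
    (G : SimpleGraph V) [DecidableRel G.Adj]
    (k : ℕ) (p : Fin k → ℝ)
    (hp : ∀ i, 0 ≤ p i ∧ p i ≤ 1)
    (hsum : 1 ≤ ∑ i, p i) :
    ∃ c : V → Fin k, ∀ v : V,
      (((G.neighborFinset v).filter (fun u => c u = c v)).card : ℝ)
        ≤ p (c v) * G.degree v := by
  classical
  -- there is a color with positive probability
  have hex : ∃ i : Fin k, 0 < p i := by
    by_contra h
    push_neg at h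
    have : ∑ i, p i ≤ 0 := Finset.sum_nonpos (fun i _ => h i)
    linarith
  obtain ⟨i₀, hi₀⟩ := hex
  -- the set of admissible colorings
  set T : Finset (V → Fin k) := Finset.univ.filter (fun c => ∀ v, 0 < p (c v)) with hT
  have hTne : T.Nonempty := ⟨fun _ => i₀, by simp [hT, hi₀]⟩
  obtain ⟨c, hcT, hmin⟩ := Finset.exists_min_image T (pcPhi G p) hTne
  have hcpos : ∀ v, 0 < p (c v) := by
    have := Finset.mem_filter.mp hcT
    exact this.2
  refine ⟨c, fun v => ?_⟩
  by_contra hbad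
  push_neg at hbad
  -- notation
  set i := c v with hi
  have hpi : 0 < p i := hcpos v
  -- degree is positive
  have hd1 : (0 : ℝ) < (G.degree v : ℝ) := by
    have h0 : (0 : ℝ) ≤ p i * G.degree v := by
      apply mul_nonneg hpi.le
      positivity
    have hcard : (0 : ℝ) < (((G.neighborFinset v).filter (fun u => c u = i)).card : ℝ) :=
      lt_of_le_of_lt h0 hbad
    have hle : ((G.neighborFinset v).filter (fun u => c u = i)).card ≤ G.degree v := by
      rw [← SimpleGraph.card_neighborFinset_eq_degree]
      exact Finset.card_filter_le _ _
    calc (0 : ℝ) < _ := hcard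
      _ ≤ (G.degree v : ℝ) := by exact_mod_cast hle
  -- there is a good color j
  have hgood : ∃ j : Fin k, 0 < p j ∧
      ((((G.neighborFinset v).filter (fun u => c u = j)).card : ℝ) ≤ p j * G.degree v) := by
    by_contra h
    push_neg at h
    -- every positive color is overloaded
    set S : Finset (Fin k) := Finset.univ.filter (fun j => 0 < p j) with hS
    have hSne : S.Nonempty := ⟨i, by simp [hS, hpi]⟩
    have hstrict : ∀ j ∈ S, p j * G.degree v
        < (((G.neighborFinset v).filter (fun u => c u = j)).card : ℝ) := by
      intro j hj
      have hj' : 0 < p j := (Finset.mem_filter.mp hj).2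
      exact h j hj'
    have hsum1 : (G.degree v : ℝ) * ∑ j ∈ S, p j
        < ∑ j ∈ S, (((G.neighborFinset v).filter (fun u => c u = j)).card : ℝ) := by
      rw [Finset.mul_sum]
      apply Finset.sum_lt_sum_of_nonempty hSne
      intro j hj
      calc (G.degree v : ℝ) * p j = p j * G.degree v := by ring
        _ < _ := hstrict j hj
    have hsum2 : (1 : ℝ) ≤ ∑ j ∈ S, p j := by
      have hsplit := Finset.sum_filter_add_sum_filter_not Finset.univ (fun j => 0 < p j) p
      have hneg : ∑ j ∈ Finset.univ.filter (fun j => ¬ 0 < p j), p j ≤ 0 := by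
        apply Finset.sum_nonpos
        intro j hj
        exact not_lt.mp (Finset.mem_filter.mp hj).2
      rw [hS]
      linarith
    have hsum3 : ∑ j ∈ S, (((G.neighborFinset v).filter (fun u => c u = j)).card : ℝ)
        ≤ (G.degree v : ℝ) := by
      have hcards : ∑ j ∈ S, ((G.neighborFinset v).filter (fun u => c u = j)).card
          ≤ G.degree v := by
        rw [← SimpleGraph.card_neighborFinset_eq_degree]
        have hall : ∑ j : Fin k, ((G.neighborFinset v).filter (fun u => c u = j)).card
            = (G.neighborFinset v).card := by
          rw [← Finset.card_eq_sum_card_fiberwise (f := c) (t := Finset.univ)]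
          intro x _
          exact Finset.mem_univ _
        calc ∑ j ∈ S, ((G.neighborFinset v).filter (fun u => c u = j)).card
            ≤ ∑ j : Fin k, ((G.neighborFinset v).filter (fun u => c u = j)).card :=
              Finset.sum_le_sum_of_subset (Finset.subset_univ S)
          _ = _ := hall
      exact_mod_cast hcards
    have : (G.degree v : ℝ) < (G.degree v : ℝ) := by
      calc (G.degree v : ℝ) = (G.degree v : ℝ) * 1 := by ring
        _ ≤ (G.degree v : ℝ) * ∑ j ∈ S, p j := by
            apply mul_le_mul_of_nonneg_left hsum2 hd1.le
        _ < _ := hsum1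
        _ ≤ (G.degree v : ℝ) := hsum3
    exact lt_irrefl _ this
  obtain ⟨j, hpj, hjgood⟩ := hgood
  -- the recolored function
  set c' := Function.update c v j with hc'
  have hc'T : c' ∈ T := by
    rw [hT, Finset.mem_filter]
    refine ⟨Finset.mem_univ _, fun w => ?_⟩
    by_cases hw : w = v
    · subst hw; rw [hc', Function.update_self]; exact hpj
    · rw [hc', Function.update_of_ne hw]; exact hcpos w
  have hlt : pcPhi G p c' < pcPhi G p c := by
    rw [hc', pcPhi_update]
    have h1 : ∑ w ∈ G.neighborFinset v, pcWeight p j (c w)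
        = (((G.neighborFinset v).filter (fun u => c u = j)).card : ℝ) * (1 / p j) :=
      pc_sum_f G p c v j
    have h2 : ∑ w ∈ G.neighborFinset v, pcWeight p (c v) (c w)
        = (((G.neighborFinset v).filter (fun u => c u = i)).card : ℝ) * (1 / p i) :=
      pc_sum_f G p c v i
    rw [h1, h2]
    have hA : (((G.neighborFinset v).filter (fun u => c u = j)).card : ℝ) * (1 / p j)
        ≤ (G.degree v : ℝ) := by
      rw [mul_one_div, div_le_iff₀ hpj]
      calc (((G.neighborFinset v).filter (fun u => c u = j)).card : ℝ)
          ≤ p j * G.degree v := hjgood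
        _ = (G.degree v : ℝ) * p j := by ring
    have hB : (G.degree v : ℝ)
        < (((G.neighborFinset v).filter (fun u => c u = i)).card : ℝ) * (1 / p i) := by
      rw [mul_one_div, lt_div_iff₀ hpi]
      calc (G.degree v : ℝ) * p i = p i * G.degree v := by ring
        _ < _ := hbad
    linarith
  exact absurd (hmin c' hc'T) (not_le.mpr hlt)
end

section
/- Every finite simple graph has an integrated k-coloring for every integer k ≥ 2. -/
open Finset

theorem integrated_k_coloring_exists
    (V : Type) [Fintype V] [DecidableEq V]
    (G : SimpleGraph V) [DecidableRel G.Adj]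
    (k : ℕ) (hk : 2 ≤ k) :
    ∃ c : V → Fin k, ∀ v : V,
      (((G.neighborFinset v).filter (fun u => c u = c v)).card : ℝ)
        ≤ (1 / k) * G.degree v := by
  have hk0 : 0 < k := by omega
  set m : (V → Fin k) → V → Fin k → ℕ :=
    fun c v j => ((G.neighborFinset v).filter (fun u => c u = j)).card with hm
  have mInt : ∀ (c₀ : V → Fin k) (u : V) (j' : Fin k),
      (m c₀ u j' : ℤ) = ∑ w ∈ G.neighborFinset u, if c₀ w = j' then (1:ℤ) else 0 := by
    intro c₀ u j'
    simp only [hm]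
    rw [Finset.card_filter]
    push_cast
    rfl
  set Φ : (V → Fin k) → ℕ := fun c => ∑ u, m c u (c u) with hΦ
  have hne : (Finset.univ : Finset (V → Fin k)).Nonempty :=
    ⟨fun _ => ⟨0, hk0⟩, mem_univ _⟩
  obtain ⟨c, -, hmin⟩ := Finset.exists_min_image Finset.univ Φ hne
  refine ⟨c, fun v => ?_⟩
  have key : ∀ j : Fin k, m c v (c v) ≤ m c v j := by
    intro j
    set c' := Function.update c v j with hc'
    have h1 : Φ c ≤ Φ c' := hmin c' (mem_univ _)
    set d : V → ℤ := fun u => (m c' u (c' u) : ℤ) - m c u (c u) with hd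
    have hc'v : c' v = j := Function.update_self v j c
    have hc'ne : ∀ w, w ≠ v → c' w = c w := fun w hw => Function.update_of_ne hw j c
    -- value of d at v
    have dv : d v = (m c v j : ℤ) - m c v (c v) := by
      have : m c' v (c' v) = m c v j := by
        rw [hc'v]
        simp only [hm]
        refine congrArg Finset.card (Finset.filter_congr ?_)
        intro w hw
        have hwv : w ≠ v := G.ne_of_adj (G.mem_neighborFinset v w |>.mp hw) |>.symm
        rw [hc'ne w hwv]
      simp [hd, this]
    -- value of d at neighbors of v
    have dnbr : ∀ u ∈ G.neighborFinset v,
        d u = (if j = c u then (1:ℤ) else 0) - (if c v = c u then (1:ℤ) else 0) := by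
      intro u hu
      have huv : u ≠ v := G.ne_of_adj (G.mem_neighborFinset v u |>.mp hu) |>.symm
      have hcu : c' u = c u := hc'ne u huv
      have hvNu : v ∈ G.neighborFinset u := by
        rw [G.mem_neighborFinset] at hu ⊢
        exact hu.symm
      rw [hd]
      simp only
      rw [mInt, mInt, hcu, ← Finset.sum_sub_distrib]
      rw [Finset.sum_eq_single_of_mem v hvNu]
      · rw [hc'v]
      · intro w hw hwv
        rw [hc'ne w hwv]
        ring
    -- d vanishes elsewhere
    have dother : ∀ u, u ∉ insert v (G.neighborFinset v) → d u = 0 := by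
      intro u hu
      rw [Finset.mem_insert] at hu
      push_neg at hu
      obtain ⟨huv, hunb⟩ := hu
      have hcu : c' u = c u := hc'ne u huv
      have hfilt : ∀ w ∈ G.neighborFinset u, w ≠ v := by
        intro w hw hwv
        subst hwv
        apply hunb
        rw [G.mem_neighborFinset] at hw ⊢
        exact hw.symm
      have : m c' u (c' u) = m c u (c u) := by
        rw [hcu]
        simp only [hm]
        refine congrArg Finset.card (Finset.filter_congr ?_)
        intro w hw
        rw [hc'ne w (hfilt w hw)]
      simp [hd, this]
    have hsum : (Φ c' : ℤ) - Φ c = ∑ u, d u := by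
      simp only [hΦ, hd]
      push_cast
      rw [Finset.sum_sub_distrib]
    have hsum2 : ∑ u, d u = 2 * ((m c v j : ℤ) - m c v (c v)) := by
      rw [← Finset.sum_subset (Finset.subset_univ (insert v (G.neighborFinset v)))
        (fun u _ hu => dother u hu)]
      rw [Finset.sum_insert (G.notMem_neighborFinset_self v), dv,
        Finset.sum_congr rfl dnbr, Finset.sum_sub_distrib]
      have e1 : ∑ u ∈ G.neighborFinset v, (if j = c u then (1:ℤ) else 0) = m c v j := by
        rw [mInt]
        apply Finset.sum_congr rfl
        intro w _
        simp [eq_comm]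
      have e2 : ∑ u ∈ G.neighborFinset v, (if c v = c u then (1:ℤ) else 0)
          = m c v (c v) := by
        rw [mInt]
        apply Finset.sum_congr rfl
        intro w _
        simp [eq_comm]
      rw [e1, e2]
      ring
    have h2 : (Φ c : ℤ) ≤ (Φ c' : ℤ) := by exact_mod_cast h1
    have h3 : (Φ c' : ℤ) - Φ c = 2 * ((m c v j : ℤ) - m c v (c v)) := hsum.trans hsum2
    have : (m c v (c v) : ℤ) ≤ m c v j := by linarith
    exact_mod_cast this
  have htotal : ∑ j : Fin k, m c v j = G.degree v := by
    rw [SimpleGraph.degree]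
    exact (Finset.card_eq_sum_card_fiberwise (fun u _ => mem_univ (c u))).symm
  have hkm : k * m c v (c v) ≤ G.degree v := by
    calc k * m c v (c v) = ∑ _j : Fin k, m c v (c v) := by
          simp [Finset.sum_const, mul_comm]
      _ ≤ ∑ j : Fin k, m c v j := Finset.sum_le_sum (fun j _ => key j)
      _ = G.degree v := htotal
  have hkR : (0:ℝ) < k := by exact_mod_cast hk0
  rw [one_div, inv_mul_eq_div, le_div_iff₀ hkR]
  have : ((m c v (c v) : ℝ)) * k ≤ G.degree v := by
    rw [mul_comm]
    exact_mod_cast hkm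
  exact this
end

section
/- Every finite graph G admits a (Δ(G)+1)-coloring that is proper, i.e., the chromatic number of G satisfies χ(G) ≤ Δ(G) + 1, and moreover this coloring can be chosen so that it is an integrated (Δ(G)+1)-coloring. -/
open Finset

noncomputable def pick {α : Type} [Fintype α] [DecidableEq α]
    (s : Finset α) (h : (Finset.univ \ s).Nonempty) : α := h.choose

lemma pick_not_mem {α : Type} [Fintype α] [DecidableEq α]
    (s : Finset α) (h : (Finset.univ \ s).Nonempty) : pick s h ∉ s :=
  (Finset.mem_sdiff.mp h.choose_spec).2

noncomputable def greedyC (V : Type) [Fintype V] [DecidableEq V]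
    (G : SimpleGraph V) [DecidableRel G.Adj] (e : V ↪ ℕ) (v : V) :
    Fin (G.maxDegree + 1) :=
  have hne : (Finset.univ \ (((G.neighborFinset v).filter
      (fun u => e u < e v)).attach.image
      (fun u => greedyC V G e u.1))).Nonempty := by
    apply Finset.card_pos.mp
    have h1 : (((G.neighborFinset v).filter (fun u => e u < e v)).attach.image
        (fun u => greedyC V G e u.1)).card ≤
        ((G.neighborFinset v).filter (fun u => e u < e v)).card := by
      refine Finset.card_image_le.trans ?_
      simp
    have h2 : ((G.neighborFinset v).filter (fun u => e u < e v)).card ≤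
        G.degree v := by
      rw [← SimpleGraph.card_neighborFinset_eq_degree]
      exact Finset.card_filter_le _ _
    have h3 := G.degree_le_maxDegree v
    rw [Finset.card_sdiff_of_subset (Finset.subset_univ _)]
    simp only [Finset.card_univ, Fintype.card_fin]
    omega
  pick _ hne
termination_by (e v : ℕ)
decreasing_by
  all_goals exact (Finset.mem_filter.mp u.2).2

lemma greedyC_notMem (V : Type) [Fintype V] [DecidableEq V]
    (G : SimpleGraph V) [DecidableRel G.Adj] (e : V ↪ ℕ) (v : V) :
    greedyC V G e v ∉ (((G.neighborFinset v).filter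
      (fun u => e u < e v)).attach.image (fun u => greedyC V G e u.1)) := by
  rw [greedyC]
  exact pick_not_mem _ _

lemma greedyC_proper (V : Type) [Fintype V] [DecidableEq V]
    (G : SimpleGraph V) [DecidableRel G.Adj] (e : V ↪ ℕ) (v w : V)
    (h : G.Adj v w) : greedyC V G e v ≠ greedyC V G e w := by
  have key : ∀ v w : V, G.Adj v w → e w < e v →
      greedyC V G e v ≠ greedyC V G e w := by
    intro v w h hlt heq
    apply greedyC_notMem V G e v
    rw [heq]
    apply Finset.mem_image.mpr
    have hw : w ∈ (G.neighborFinset v).filter (fun u => e u < e v) := by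
      simp [h, hlt]
    exact ⟨⟨w, hw⟩, Finset.mem_attach _ _, rfl⟩
  rcases lt_trichotomy (e w) (e v) with hlt | heqn | hgt
  · exact key v w h hlt
  · exact absurd (e.injective heqn) (G.ne_of_adj h).symm
  · exact fun heq => key w v h.symm hgt heq.symm

theorem brooks_bound_integrated
    (V : Type) [Fintype V] [DecidableEq V]
    (G : SimpleGraph V) [DecidableRel G.Adj] :
    ∃ c : V → Fin (G.maxDegree + 1),
      (∀ v w : V, G.Adj v w → c v ≠ c w) ∧
      (∀ v : V,
        (((G.neighborFinset v).filter (fun u => c u = c v)).card : ℝ)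
          ≤ (1 / (G.maxDegree + 1 : ℝ)) * G.degree v) := by
  classical
  let e : V ↪ ℕ := (Fintype.equivFin V).toEmbedding.trans Fin.valEmbedding
  refine ⟨greedyC V G e, greedyC_proper V G e, fun v => ?_⟩
  have hempty : (G.neighborFinset v).filter
      (fun u => greedyC V G e u = greedyC V G e v) = ∅ := by
    rw [Finset.eq_empty_iff_forall_notMem]
    intro u hu
    rw [Finset.mem_filter, SimpleGraph.mem_neighborFinset] at hu
    exact greedyC_proper V G e u v hu.1.symm hu.2
  rw [hempty]
  simp only [Finset.card_empty, Nat.cast_zero]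
  positivity
end

section
/- Let G be a finite graph and let u ≥ 0, k ≥ 1 be integers with Δ(G) ≤ k(u+1) − 1. Then G admits a (k,u)-coloring, i.e., a k-coloring such that every vertex has at most u neighbors with the same color as itself. -/
open Finset

theorem defective_coloring_exists
    (V : Type) [Fintype V] [DecidableEq V]
    (G : SimpleGraph V) [DecidableRel G.Adj]
    (k u : ℕ) (hk : 1 ≤ k)
    (hΔ : G.maxDegree ≤ k * (u + 1) - 1) :
    ∃ c : V → Fin k, ∀ v : V,
      ((G.neighborFinset v).filter (fun w => c w = c v)).card ≤ u := by
  classical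
  have hkpos : 0 < k := hk
  set F : (V → Fin k) → ℕ :=
    fun c => ∑ v, ((G.neighborFinset v).filter (fun w => c w = c v)).card with hF
  obtain ⟨c, -, hmin⟩ := Finset.exists_min_image (Finset.univ : Finset (V → Fin k)) F
    ⟨fun _ => ⟨0, hkpos⟩, Finset.mem_univ _⟩
  refine ⟨c, fun v => ?_⟩
  by_contra hcon
  push_neg at hcon
  set cnt : Fin k → ℕ := fun j => ((G.neighborFinset v).filter (fun w => c w = j)).card
    with hcnt
  have hsum : ∑ j, cnt j = G.degree v := by
    rw [← SimpleGraph.card_neighborFinset_eq_degree]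
    exact (Finset.card_eq_sum_card_fiberwise (fun w _ => Finset.mem_univ (c w))).symm
  have hdeg : G.degree v ≤ k * (u + 1) - 1 := le_trans (G.degree_le_maxDegree v) hΔ
  have hex : ∃ j, cnt j ≤ u := by
    by_contra hno
    push_neg at hno
    have h1 : k * (u + 1) ≤ ∑ j, cnt j := by
      calc k * (u + 1) = ∑ _j : Fin k, (u + 1) := by simp [Finset.sum_const, mul_comm]
        _ ≤ ∑ j, cnt j := Finset.sum_le_sum (fun j _ => hno j)
    have h2 : 1 ≤ k * (u + 1) := Nat.one_le_iff_ne_zero.mpr (by positivity)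
    omega
  obtain ⟨i, hi⟩ := hex
  have hlt : cnt i < cnt (c v) := lt_of_le_of_lt hi hcon
  set c' : V → Fin k := Function.update c v i with hc'
  -- key per-vertex equation for w ≠ v
  have key : ∀ w, w ≠ v →
      ((G.neighborFinset w).filter (fun x => c' x = c' w)).card
        + (if G.Adj v w ∧ c v = c w then 1 else 0)
      = ((G.neighborFinset w).filter (fun x => c x = c w)).card
        + (if G.Adj v w ∧ i = c w then 1 else 0) := by
    intro w hw
    have hcw : c' w = c w := Function.update_of_ne hw _ _
    by_cases hadj : G.Adj v w
    · have hv : v ∈ G.neighborFinset w := by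
        rw [SimpleGraph.mem_neighborFinset]; exact hadj.symm
      have hB : (((G.neighborFinset w).erase v).filter (fun x => c' x = c w))
          = (((G.neighborFinset w).erase v).filter (fun x => c x = c w)) := by
        apply Finset.filter_congr
        intro x hx
        have hxv : x ≠ v := Finset.ne_of_mem_erase hx
        rw [hc', Function.update_of_ne hxv]
      have hcv : c' v = i := Function.update_self _ _ _
      rw [← Finset.insert_erase hv, Finset.filter_insert, Finset.filter_insert]
      by_cases h1 : c v = c w <;> by_cases h2 : i = c w <;>
        simp [hcv, hcw, h1, h2, hB, hadj,
          Finset.card_insert_of_notMem (Finset.notMem_erase v _)]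
    · have hv : v ∉ G.neighborFinset w := by
        rw [SimpleGraph.mem_neighborFinset]; exact fun h => hadj h.symm
      have hB : ((G.neighborFinset w).filter (fun x => c' x = c' w))
          = ((G.neighborFinset w).filter (fun x => c x = c w)) := by
        apply Finset.filter_congr
        intro x hx
        have hxv : x ≠ v := fun h => hv (h ▸ hx)
        rw [hcw, hc', Function.update_of_ne hxv]
      simp [hadj, hB]
  have hcnt_eq : ∀ j, cnt j = ∑ w, (if G.Adj v w ∧ j = c w then 1 else 0) := by
    intro j
    have h0 : cnt j = ∑ w ∈ G.neighborFinset v, (if c w = j then 1 else 0) :=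
      Finset.card_filter _ _
    rw [h0, SimpleGraph.neighborFinset_eq_filter, Finset.sum_filter]
    refine Finset.sum_congr rfl fun x _ => ?_
    by_cases h : G.Adj v x <;> by_cases h2 : j = c x <;>
      simp [h, h2, eq_comm]
  have hzero : ∀ j : Fin k, (if G.Adj v v ∧ j = c v then 1 else 0) = 0 := by
    intro j; simp [G.irrefl]
  have hS : (∑ w ∈ Finset.univ.erase v,
        ((G.neighborFinset w).filter (fun x => c' x = c' w)).card) + cnt (c v)
      = (∑ w ∈ Finset.univ.erase v,
        ((G.neighborFinset w).filter (fun x => c x = c w)).card) + cnt i := by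
    have e1 : ∀ j : Fin k, (∑ w, (if G.Adj v w ∧ j = c w then 1 else 0))
        = ∑ w ∈ Finset.univ.erase v, (if G.Adj v w ∧ j = c w then 1 else 0) := by
      intro j
      rw [← Finset.add_sum_erase _ _ (Finset.mem_univ v), hzero j, zero_add]
    rw [hcnt_eq (c v), hcnt_eq i, e1, e1,
      ← Finset.sum_add_distrib, ← Finset.sum_add_distrib]
    exact Finset.sum_congr rfl (fun w hw => key w (Finset.ne_of_mem_erase hw))
  have hgv' : ((G.neighborFinset v).filter (fun x => c' x = c' v)).card = cnt i := by
    rw [hcnt]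
    congr 1
    apply Finset.filter_congr
    intro x hx
    have hxv : x ≠ v := by
      rintro rfl
      simp at hx
    rw [hc', Function.update_of_ne hxv, Function.update_self]
  have h1 : F c' = ((G.neighborFinset v).filter (fun x => c' x = c' v)).card
      + ∑ w ∈ Finset.univ.erase v,
        ((G.neighborFinset w).filter (fun x => c' x = c' w)).card :=
    (Finset.add_sum_erase _ _ (Finset.mem_univ v)).symm
  have h2 : F c = cnt (c v)
      + ∑ w ∈ Finset.univ.erase v,
        ((G.neighborFinset w).filter (fun x => c x = c w)).card :=
    (Finset.add_sum_erase _ _ (Finset.mem_univ v)).symm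
  have hFlt : F c' < F c := by
    rw [h1, hgv', h2]
    omega
  exact absurd (hmin c' (Finset.mem_univ _)) (by omega)
end

section
/- In any integrated k-coloring of a finite graph G with m edges, at least ((k−1)/k)·m of the edges are mixed (i.e., have endpoints of different colors). -/
/-!
Counting each monochromatic edge from both endpoints, twice the number of monochromatic edges is
the sum over `v` of the neighbours of `v` sharing its colour; integration bounds this by
`(1/k) Σ deg v = 2m/k`, so at most `m/k` edges are monochromatic and the rest are mixed.
-/

open Finset

namespace SimpleGraph

variable {V α : Type*} (G : SimpleGraph V) (c : V → α)

def monochromaticSubgraph : SimpleGraph V where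
  Adj u v := G.Adj u v ∧ c u = c v
  symm := ⟨fun _ _ h => ⟨h.1.symm, h.2.symm⟩⟩
  loopless := ⟨fun v h => G.loopless.irrefl v h.1⟩

@[simp]
theorem monochromaticSubgraph_adj {u v : V} :
    (G.monochromaticSubgraph c).Adj u v ↔ G.Adj u v ∧ c u = c v :=
  Iff.rfl

variable [Fintype V] [DecidableRel G.Adj] [DecidableEq α]

instance : DecidableRel (G.monochromaticSubgraph c).Adj := fun _ _ => instDecidableAnd

theorem neighborFinset_monochromaticSubgraph (v : V) :
    (G.monochromaticSubgraph c).neighborFinset v = {u ∈ G.neighborFinset v | c u = c v} := by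
  ext u
  simp [eq_comm]

theorem edgeFinset_monochromaticSubgraph :
    (G.monochromaticSubgraph c).edgeFinset = {e ∈ G.edgeFinset | (e.map c).IsDiag} := by
  ext e
  induction e using Sym2.ind
  simp

theorem sum_card_monochromatic_neighbors :
    ∑ v, #{u ∈ G.neighborFinset v | c u = c v} = 2 * #{e ∈ G.edgeFinset | (e.map c).IsDiag} := by
  rw [← edgeFinset_monochromaticSubgraph, ← sum_degrees_eq_twice_card_edges]
  simp only [← card_neighborFinset_eq_degree, neighborFinset_monochromaticSubgraph]

theorem card_monochromatic_edges_le {r : ℝ}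
    (h : ∀ v, (#{u ∈ G.neighborFinset v | c u = c v} : ℝ) ≤ r * G.degree v) :
    (#{e ∈ G.edgeFinset | (e.map c).IsDiag} : ℝ) ≤ r * #G.edgeFinset := by
  have hsum : ((2 * #{e ∈ G.edgeFinset | (e.map c).IsDiag} : ℕ) : ℝ) ≤
      r * ((2 * #G.edgeFinset : ℕ) : ℝ) := by
    rw [← sum_card_monochromatic_neighbors, ← sum_degrees_eq_twice_card_edges]
    push_cast
    rw [mul_sum]
    exact sum_le_sum fun v _ => h v
  push_cast at hsum
  linarith

theorem card_mixed_edges_ge {r : ℝ}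
    (h : ∀ v, (#{u ∈ G.neighborFinset v | c u = c v} : ℝ) ≤ r * G.degree v) :
    (1 - r) * #G.edgeFinset ≤ #{e ∈ G.edgeFinset | ¬(e.map c).IsDiag} := by
  have hsplit : (#{e ∈ G.edgeFinset | (e.map c).IsDiag} : ℝ) +
      #{e ∈ G.edgeFinset | ¬(e.map c).IsDiag} = #G.edgeFinset := by
    exact_mod_cast card_filter_add_card_filter_not _
  linarith [G.card_monochromatic_edges_le c h]

end SimpleGraph

theorem integrated_mixing_bound_general
    (V : Type) [Fintype V]
    (G : SimpleGraph V) [DecidableRel G.Adj]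
    (k : ℕ) (c : V → Fin k)
    (hint : ∀ v : V,
      (((G.neighborFinset v).filter (fun u => c u = c v)).card : ℝ)
        ≤ (1 / k) * G.degree v) :
    ((k - 1 : ℝ) / k) * G.edgeFinset.card
      ≤ ((G.edgeFinset.filter (fun e => ¬ (Sym2.map c e).IsDiag)).card : ℝ) := by
  -- an equality for `k > 0`; at `k = 0` the left side is the junk value `0`
  have hcoeff : (k - 1 : ℝ) / k ≤ 1 - 1 / k := by
    rw [sub_div]
    exact sub_le_sub_right (div_self_le_one _) _
  calc ((k - 1 : ℝ) / k) * G.edgeFinset.card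
      ≤ (1 - 1 / k) * G.edgeFinset.card := by gcongr
    _ ≤ _ := G.card_mixed_edges_ge c hint

theorem integrated_mixing_bound
    (V : Type) [Fintype V] [DecidableEq V]
    (G : SimpleGraph V) [DecidableRel G.Adj]
    (k : ℕ) (c : V → Fin k)
    (hint : ∀ v : V,
      (((G.neighborFinset v).filter (fun u => c u = c v)).card : ℝ)
        ≤ (1 / k) * G.degree v) :
    ((k - 1 : ℝ) / k) * G.edgeFinset.card
      ≤ ((G.edgeFinset.filter (fun e => ¬ (Sym2.map c e).IsDiag)).card : ℝ) :=
  integrated_mixing_bound_general V G k c hint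
end

section
/- The vertex set of any finite graph with m edges can be partitioned into two sets V₁ and V₂ such that at least m/2 edges have one endpoint in V₁ and one in V₂. -/
open Finset

private def toggle {V : Type} [DecidableEq V] (a : V) (s : Finset V) : Finset V :=
  if a ∈ s then s.erase a else insert a s

private lemma toggle_toggle {V : Type} [DecidableEq V] (a : V) (s : Finset V) :
    toggle a (toggle a s) = s := by
  unfold toggle
  by_cases h : a ∈ s <;> simp [h, Finset.insert_erase, Finset.erase_insert]

private lemma mem_toggle_self {V : Type} [DecidableEq V] (a : V) (s : Finset V) :
    a ∈ toggle a s ↔ a ∉ s := by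
  unfold toggle; split <;> simp_all

private lemma mem_toggle_other {V : Type} [DecidableEq V] {a b : V} (h : b ≠ a)
    (s : Finset V) : b ∈ toggle a s ↔ b ∈ s := by
  unfold toggle; split <;> simp [h]

private lemma count_cross {V : Type} [Fintype V] [DecidableEq V] {a b : V} (hab : a ≠ b) :
    2 * (univ.filter (fun s : Finset V => ¬ ((a ∈ s) ↔ (b ∈ s)))).card
      = 2 ^ Fintype.card V := by
  have hbij : (univ.filter (fun s : Finset V => ¬ ((a ∈ s) ↔ (b ∈ s)))).card
      = (univ.filter (fun s : Finset V => ((a ∈ s) ↔ (b ∈ s)))).card := by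
    apply Finset.card_bij' (fun s _ => toggle a s) (fun s _ => toggle a s)
    · intro s hs
      simp only [Finset.mem_filter, Finset.mem_univ, true_and] at hs ⊢
      rw [mem_toggle_self, mem_toggle_other hab.symm]
      tauto
    · intro s hs
      simp only [Finset.mem_filter, Finset.mem_univ, true_and] at hs ⊢
      rw [mem_toggle_self, mem_toggle_other hab.symm]
      tauto
    · intro s _; exact toggle_toggle a s
    · intro s _; exact toggle_toggle a s
  have hkey := Finset.card_filter_add_card_filter_not
      (s := (univ : Finset (Finset V))) (p := fun s : Finset V => ((a ∈ s) ↔ (b ∈ s)))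
  rw [Finset.card_univ, Fintype.card_finset] at hkey
  omega

theorem exists_cut_half_edges
    (V : Type) [Fintype V] [DecidableEq V]
    (G : SimpleGraph V) [DecidableRel G.Adj] :
    ∃ s : Finset V,
      (G.edgeFinset.card : ℝ) / 2
        ≤ ((G.edgeFinset.filter
            (fun e => ¬ (Sym2.map (fun v => decide (v ∈ s)) e).IsDiag)).card : ℝ) := by
  set n := Fintype.card V with hn
  have key : ∀ e ∈ G.edgeFinset,
      2 * (univ.filter (fun s : Finset V =>
        ¬ (Sym2.map (fun v => decide (v ∈ s)) e).IsDiag)).card = 2 ^ n := by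
    intro e he
    induction e using Sym2.ind with
    | _ a b =>
      rw [SimpleGraph.mem_edgeFinset, SimpleGraph.mem_edgeSet] at he
      have hab : a ≠ b := G.ne_of_adj he
      rw [← count_cross hab]
      congr 1
      congr 1
      apply Finset.filter_congr
      intro s _
      simp [Sym2.isDiag_iff_proj_eq, decide_eq_decide]
  have hsum : 2 * ∑ s : Finset V, (G.edgeFinset.filter
      (fun e => ¬ (Sym2.map (fun v => decide (v ∈ s)) e).IsDiag)).card
      = G.edgeFinset.card * 2 ^ n := by
    have hcomm : ∑ s : Finset V, (G.edgeFinset.filter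
        (fun e => ¬ (Sym2.map (fun v => decide (v ∈ s)) e).IsDiag)).card
        = ∑ e ∈ G.edgeFinset, (univ.filter (fun s : Finset V =>
            ¬ (Sym2.map (fun v => decide (v ∈ s)) e).IsDiag)).card := by
      simp only [Finset.card_filter]
      exact Finset.sum_comm
    rw [hcomm, Finset.mul_sum, Finset.sum_congr rfl key, Finset.sum_const,
      smul_eq_mul]
  have hcast : (2 : ℝ) * ∑ s : Finset V, ((G.edgeFinset.filter
      (fun e => ¬ (Sym2.map (fun v => decide (v ∈ s)) e).IsDiag)).card : ℝ)
      = (G.edgeFinset.card : ℝ) * 2 ^ n := by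
    exact_mod_cast congrArg (fun k : ℕ => (k : ℝ)) hsum
  have hle : ∑ _s : Finset V, (G.edgeFinset.card : ℝ) / 2
      ≤ ∑ s : Finset V, ((G.edgeFinset.filter
        (fun e => ¬ (Sym2.map (fun v => decide (v ∈ s)) e).IsDiag)).card : ℝ) := by
    rw [Finset.sum_const, Finset.card_univ, Fintype.card_finset, nsmul_eq_mul]
    push_cast
    linarith [hcast]
  obtain ⟨s, -, hs⟩ := Finset.exists_le_of_sum_le Finset.univ_nonempty hle
  exact ⟨s, hs⟩
end

section
/- The vertex set of any finite graph with m edges can be partitioned into k sets V₁,…,V_k such that at least ((k−1)/k)·m edges have endpoints in two different sets of the partition. -/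
open Finset

lemma count_edge_aux (V : Type) [Fintype V] [DecidableEq V] (k : ℕ) (u v : V) (huv : u ≠ v) :
    ∑ P : V → Fin k, (if P u ≠ P v then (1 : ℕ) else 0)
      = (k - 1) * k ^ (Fintype.card V - 1) := by
  rw [← Equiv.sum_comp (Equiv.funSplitAt u (Fin k)).symm
      (fun P => if P u ≠ P v then (1 : ℕ) else 0)]
  rw [Fintype.sum_prod_type_right]
  have hval : ∀ (q : Fin k × ({ j // j ≠ u } → Fin k)),
      ((Equiv.funSplitAt u (Fin k)).symm q) u = q.1 := by
    intro q; simp [Equiv.funSplitAt, Equiv.piSplitAt]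
  have hval2 : ∀ (q : Fin k × ({ j // j ≠ u } → Fin k)),
      ((Equiv.funSplitAt u (Fin k)).symm q) v = q.2 ⟨v, huv.symm⟩ := by
    intro q; simp [Equiv.funSplitAt, Equiv.piSplitAt, huv.symm]
  calc ∑ g : { j // j ≠ u } → Fin k, ∑ c : Fin k,
        (if ((Equiv.funSplitAt u (Fin k)).symm (c, g)) u
            ≠ ((Equiv.funSplitAt u (Fin k)).symm (c, g)) v then (1 : ℕ) else 0)
      = ∑ g : { j // j ≠ u } → Fin k, ∑ c : Fin k,
        (if c ≠ g ⟨v, huv.symm⟩ then (1 : ℕ) else 0) := by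
        refine Finset.sum_congr rfl fun g _ => Finset.sum_congr rfl fun c _ => ?_
        rw [hval (c, g), hval2 (c, g)]
    _ = ∑ g : { j // j ≠ u } → Fin k, (k - 1) := by
        refine Finset.sum_congr rfl fun g _ => ?_
        rw [← Finset.card_filter, Finset.filter_ne', 
          Finset.card_erase_of_mem (Finset.mem_univ _), Finset.card_univ,
          Fintype.card_fin]
    _ = (k - 1) * k ^ (Fintype.card V - 1) := by
        rw [Finset.sum_const, Finset.card_univ, smul_eq_mul, mul_comm]
        congr 1
        rw [Fintype.card_fun, Fintype.card_fin]
        congr 1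
        have : Fintype.card { j // j = u } = 1 := Fintype.card_subtype_eq u
        have h2 := Fintype.card_subtype_compl (fun j : V => j = u)
        rw [this] at h2
        exact h2

theorem exists_k_cut_bound
    (V : Type) [Fintype V] [DecidableEq V]
    (G : SimpleGraph V) [DecidableRel G.Adj]
    (k : ℕ) (hk : 2 ≤ k) :
    ∃ P : V → Fin k,
      ((k - 1 : ℝ) / k) * G.edgeFinset.card
        ≤ ((G.edgeFinset.filter (fun e => ¬ (Sym2.map P e).IsDiag)).card : ℝ) := by
  classical
  have hk0 : (0 : ℕ) < k := lt_of_lt_of_le two_pos hk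
  by_cases hm : G.edgeFinset = ∅
  · exact ⟨fun _ => ⟨0, hk0⟩, by simp [hm]⟩
  -- V is nonempty
  obtain ⟨e₀, he₀⟩ := Finset.nonempty_iff_ne_empty.mpr hm
  have hn : 1 ≤ Fintype.card V := by
    refine Fintype.card_pos_iff.mpr ?_
    induction e₀ using Sym2.ind with
    | _ u v => exact ⟨u⟩
  set n := Fintype.card V with hn'
  -- sum of cut sizes over all colorings
  have hsum : ∑ P : V → Fin k,
      (G.edgeFinset.filter (fun e => ¬ (Sym2.map P e).IsDiag)).card
      = G.edgeFinset.card * ((k - 1) * k ^ (n - 1)) := by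
    have : ∀ P : V → Fin k,
        (G.edgeFinset.filter (fun e => ¬ (Sym2.map P e).IsDiag)).card
        = ∑ e ∈ G.edgeFinset, (if ¬ (Sym2.map P e).IsDiag then (1 : ℕ) else 0) := by
      intro P; rw [Finset.card_filter]
    simp_rw [this]
    rw [Finset.sum_comm]
    rw [Finset.sum_congr rfl (fun e he => ?_), Finset.sum_const, smul_eq_mul]
    induction e using Sym2.ind with
    | _ u v =>
      have hadj : G.Adj u v := by
        rw [SimpleGraph.mem_edgeFinset, SimpleGraph.mem_edgeSet] at he
        exact he
      have huv : u ≠ v := hadj.ne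
      calc ∑ P : V → Fin k, (if ¬ (Sym2.map P s(u, v)).IsDiag then (1 : ℕ) else 0)
          = ∑ P : V → Fin k, (if P u ≠ P v then (1 : ℕ) else 0) := by
            refine Finset.sum_congr rfl fun P _ => ?_
            simp [Sym2.map_pair_eq, Sym2.mk_isDiag_iff]
        _ = (k - 1) * k ^ (Fintype.card V - 1) := count_edge_aux V k u v huv
  -- averaging
  have hcardfun : Fintype.card (V → Fin k) = k ^ n := by
    rw [Fintype.card_fun, Fintype.card_fin]
  haveI : Nonempty (V → Fin k) := ⟨fun _ => ⟨0, hk0⟩⟩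
  have key : ∑ _P : V → Fin k, ((k - 1 : ℝ) / k) * G.edgeFinset.card
      ≤ ∑ P : V → Fin k,
        ((G.edgeFinset.filter (fun e => ¬ (Sym2.map P e).IsDiag)).card : ℝ) := by
    rw [Finset.sum_const, Finset.card_univ, hcardfun]
    have : (∑ P : V → Fin k,
        ((G.edgeFinset.filter (fun e => ¬ (Sym2.map P e).IsDiag)).card : ℝ))
        = ((G.edgeFinset.card * ((k - 1) * k ^ (n - 1)) : ℕ) : ℝ) := by
      rw [← hsum]; push_cast; ring
    rw [this]
    have hkR : (0 : ℝ) < (k : ℝ) := by exact_mod_cast hk0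
    have hpow : (k : ℝ) ^ n = (k : ℝ) ^ (n - 1) * k := by
      rw [← pow_succ]
      congr 1
      omega
    rw [nsmul_eq_mul]
    push_cast [Nat.cast_sub (le_of_lt (lt_of_lt_of_le one_lt_two hk))]
    rw [hpow]
    apply le_of_eq
    field_simp
  obtain ⟨P, _, hP⟩ := Finset.exists_le_of_sum_le Finset.univ_nonempty key
  exact ⟨P, hP⟩
end

section
/- Every locally finite (possibly infinite) graph has an integrated k-coloring for every integer k ≥ 2. -/
/-!
Fix a finite set `F` of vertices and let `W` be `F` together with its neighbours. A `k`-colouring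
minimising the number of monochromatic edges inside `W` is good at every `v ∈ F`: recolouring `v`
with the colour least frequent among its neighbours (which at most `deg v / k` of them carry)
changes that number by twice the change in the number of neighbours sharing the colour of `v`.
Being good at `v` depends on finitely many coordinates, hence is a closed condition in the compact
space `V → Fin k`; these conditions have the finite intersection property, so some colouring
satisfies all of them.
-/

open Finset

theorem exists_forall_of_forall_finset {ι X : Type*} [TopologicalSpace X] [CompactSpace X]
    {P : ι → X → Prop} (hP : ∀ i, IsClosed {x | P i x})
    (h : ∀ F : Finset ι, ∃ x, ∀ i ∈ F, P i x) : ∃ x, ∀ i, P i x := by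
  obtain ⟨x, -, hx⟩ := isCompact_univ.inter_iInter_nonempty _ hP fun F ↦ by
    obtain ⟨x, hx⟩ := h F
    exact ⟨x, trivial, Set.mem_iInter₂.2 hx⟩
  exact ⟨x, Set.mem_iInter.1 hx⟩

theorem continuous_card_filter_apply_eq {α β : Type*} [TopologicalSpace β] [DiscreteTopology β]
    [DecidableEq β] (s : Finset α) (a : α) :
    Continuous fun c : α → β ↦ #{u ∈ s | c u = c a} := by
  simp only [card_filter]
  refine continuous_finsetSum s fun u _ ↦ ?_
  have : Continuous fun c : α → β ↦ (c u, c a) := by fun_prop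
  exact (continuous_of_discreteTopology
    (f := fun p : β × β ↦ if p.1 = p.2 then 1 else (0 : ℕ))).comp this

theorem Finset.exists_card_mul_card_fiber_le {α β : Type*} [Fintype β] [Nonempty β]
    [DecidableEq β] (s : Finset α) (f : α → β) :
    ∃ y, Fintype.card β * #{x ∈ s | f x = y} ≤ #s := by
  obtain ⟨y, -, hy⟩ := exists_min_image univ (fun y ↦ #{x ∈ s | f x = y}) univ_nonempty
  refine ⟨y, ?_⟩
  calc Fintype.card β * #{x ∈ s | f x = y} = ∑ _z : β, #{x ∈ s | f x = y} := by simp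
    _ ≤ ∑ z, #{x ∈ s | f x = z} := sum_le_sum fun z _ ↦ hy z (mem_univ z)
    _ = #s := (card_eq_sum_card_fiberwise fun x _ ↦ mem_univ (f x)).symm

namespace SimpleGraph

variable {V β : Type*} [DecidableEq β]

section Monochromatic

variable (G : SimpleGraph V) [DecidableRel G.Adj]

def monochromaticPairs (c : V → β) (W : Finset V) : ℕ :=
  ∑ u ∈ W, #{w ∈ W | G.Adj u w ∧ c u = c w}

variable {G}

theorem monochromaticPairs_congr {c c' : V → β} {W : Finset V} (h : ∀ u ∈ W, c u = c' u) :
    G.monochromaticPairs c W = G.monochromaticPairs c' W := by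
  refine sum_congr rfl fun u hu ↦ ?_
  congr 1
  refine filter_congr fun w hw ↦ ?_
  rw [h u hu, h w hw]

theorem monochromaticPairs_eq_erase_add [DecidableEq V] [G.LocallyFinite] (c : V → β)
    {W : Finset V} {v : V} (hv : v ∈ W) (hN : G.neighborFinset v ⊆ W) :
    G.monochromaticPairs c W =
      G.monochromaticPairs c (W.erase v) + 2 * #{u ∈ G.neighborFinset v | c u = c v} := by
  have hout : #{w ∈ W | G.Adj v w ∧ c v = c w} = #{u ∈ G.neighborFinset v | c u = c v} := by
    congr 1
    ext w
    simp only [mem_filter, mem_neighborFinset]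
    exact ⟨fun h ↦ ⟨h.2.1, h.2.2.symm⟩, fun h ↦ ⟨hN (by simpa using h.1), h.1, h.2.symm⟩⟩
  have hin : ∑ u ∈ W.erase v, (if G.Adj u v ∧ c u = c v then 1 else 0) =
      #{u ∈ G.neighborFinset v | c u = c v} := by
    rw [← card_filter]
    congr 1
    ext u
    simp only [mem_filter, mem_erase, mem_neighborFinset]
    exact ⟨fun h ↦ ⟨h.2.1.symm, h.2.2⟩,
      fun h ↦ ⟨⟨h.1.ne', hN (by simpa using h.1)⟩, h.1.symm, h.2⟩⟩
  have hrow : ∀ u, #{w ∈ W | G.Adj u w ∧ c u = c w} =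
      #{w ∈ W.erase v | G.Adj u w ∧ c u = c w} + if G.Adj u v ∧ c u = c v then 1 else 0 := by
    intro u
    simp only [card_filter]
    exact (sum_erase_add W _ hv).symm
  unfold monochromaticPairs
  rw [← add_sum_erase W _ hv, hout, sum_congr rfl fun u _ ↦ hrow u, sum_add_distrib, hin]
  ring

theorem mul_card_filter_neighborFinset_le_degree [DecidableEq V] [G.LocallyFinite] [Fintype β]
    {c : V → β} {W : Finset V}
    (hmin : ∀ c' : V → β, G.monochromaticPairs c W ≤ G.monochromaticPairs c' W)
    {v : V} (hv : v ∈ W) (hN : G.neighborFinset v ⊆ W) :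
    Fintype.card β * #{u ∈ G.neighborFinset v | c u = c v} ≤ G.degree v := by
  have : Nonempty β := ⟨c v⟩
  obtain ⟨j, hj⟩ := (G.neighborFinset v).exists_card_mul_card_fiber_le c
  set c' : V → β := Function.update c v j
  have hc' : #{u ∈ G.neighborFinset v | c' u = c' v} = #{u ∈ G.neighborFinset v | c u = j} := by
    refine congrArg card (filter_congr fun u hu ↦ ?_)
    have hne : u ≠ v := ((G.mem_neighborFinset v u).1 hu).ne'
    simp only [c', Function.update_self, Function.update_of_ne hne]
  have hrest : G.monochromaticPairs c' (W.erase v) = G.monochromaticPairs c (W.erase v) :=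
    monochromaticPairs_congr fun u hu ↦ Function.update_of_ne (ne_of_mem_erase hu) _ _
  have hle := hmin c'
  rw [monochromaticPairs_eq_erase_add c hv hN, monochromaticPairs_eq_erase_add c' hv hN, hrest,
    hc'] at hle
  calc Fintype.card β * #{u ∈ G.neighborFinset v | c u = c v}
      ≤ Fintype.card β * #{u ∈ G.neighborFinset v | c u = j} := Nat.mul_le_mul_left _ (by omega)
    _ ≤ G.degree v := card_neighborFinset_eq_degree G v ▸ hj

end Monochromatic

theorem exists_coloring_forall_mem_mul_card_le_degree (G : SimpleGraph V) [G.LocallyFinite]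
    [Fintype β] [Nonempty β] (F : Finset V) :
    ∃ c : V → β, ∀ v ∈ F, Fintype.card β * #{u ∈ G.neighborFinset v | c u = c v} ≤ G.degree v := by
  classical
  let W := F ∪ F.biUnion fun v ↦ G.neighborFinset v
  refine ⟨Function.argmin (G.monochromaticPairs · W), fun v hv ↦ ?_⟩
  have hN : G.neighborFinset v ⊆ W := fun u hu ↦ mem_union_right _ (mem_biUnion.2 ⟨v, hv, hu⟩)
  exact mul_card_filter_neighborFinset_le_degree
    (fun c' ↦ Function.argmin_le (G.monochromaticPairs · W) c') (mem_union_left _ hv) hN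

end SimpleGraph

theorem locally_finite_integrated_coloring_general
    (V : Type) (G : SimpleGraph V)
    [G.LocallyFinite]
    (k : ℕ) (hk : 2 ≤ k) :
    ∃ c : V → Fin k, ∀ v : V,
      (((G.neighborFinset v).filter (fun u => c u = c v)).card : ℝ)
        ≤ (1 / k) * G.degree v := by
  have : NeZero k := ⟨by omega⟩
  obtain ⟨c, hc⟩ := exists_forall_of_forall_finset
    (P := fun v (c : V → Fin k) ↦ k * #{u ∈ G.neighborFinset v | c u = c v} ≤ G.degree v)
    (fun v ↦ (isClosed_discrete {n | k * n ≤ G.degree v}).preimage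
      (continuous_card_filter_apply_eq (G.neighborFinset v) v))
    (by simpa using G.exists_coloring_forall_mem_mul_card_le_degree (β := Fin k))
  refine ⟨c, fun v ↦ ?_⟩
  rw [one_div_mul_eq_div, le_div_iff₀ (by positivity), mul_comm]
  exact_mod_cast hc v

theorem locally_finite_integrated_coloring
    (V : Type) (G : SimpleGraph V) [DecidableEq V] [DecidableRel G.Adj]
    [G.LocallyFinite]
    (k : ℕ) (hk : 2 ≤ k) :
    ∃ c : V → Fin k, ∀ v : V,
      (((G.neighborFinset v).filter (fun u => c u = c v)).card : ℝ)
        ≤ (1 / k) * G.degree v :=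
  locally_finite_integrated_coloring_general V G k hk
end

section
/- Every finite graph has a 3-coloring such that every vertex v has at most (1/3)|N(v)| neighbors of its own color; in particular, it has at most (1/2)|N(v)| neighbors of its own color (an unfriendly 3-partition). -/
open Finset

private lemma phi_decomp {V : Type} [Fintype V] [DecidableEq V]
    (G : SimpleGraph V) [DecidableRel G.Adj] (c : V → Fin 3) (v : V) :
    ∑ w, ((G.neighborFinset w).filter (fun u => c u = c w)).card
      = (∑ w ∈ univ.erase v,
          (((G.neighborFinset w).erase v).filter (fun u => c u = c w)).card)
        + 2 * ((G.neighborFinset v).filter (fun u => c u = c v)).card := by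
  classical
  have key : ∀ w, ((G.neighborFinset w).filter (fun u => c u = c w)).card
      = (((G.neighborFinset w).erase v).filter (fun u => c u = c w)).card
        + (if v ∈ G.neighborFinset w ∧ c v = c w then 1 else 0) := by
    intro w
    by_cases hv : v ∈ G.neighborFinset w
    · by_cases hcv : c v = c w
      · simp only [hv, hcv, and_self, if_true]
        rw [Finset.filter_erase]
        have hvm : v ∈ (G.neighborFinset w).filter (fun u => c u = c w) := by
          simp [hv, hcv]
        exact (Finset.card_erase_add_one hvm).symm
      · simp only [hv, hcv, and_false, if_false]
        rw [Finset.filter_erase]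
        have hnm : v ∉ (G.neighborFinset w).filter (fun u => c u = c w) :=
          fun hmem => hcv (Finset.mem_filter.mp hmem).2
        rw [Finset.erase_eq_of_notMem hnm, Nat.add_zero]
    · simp [Finset.erase_eq_of_notMem hv, hv]
  have h1 : ∑ w, ((G.neighborFinset w).filter (fun u => c u = c w)).card
      = (∑ w, (((G.neighborFinset w).erase v).filter (fun u => c u = c w)).card)
        + ∑ w, (if v ∈ G.neighborFinset w ∧ c v = c w then 1 else 0) := by
    rw [← Finset.sum_add_distrib]
    exact Finset.sum_congr rfl fun w _ => key w
  have h2 : (∑ w, (if v ∈ G.neighborFinset w ∧ c v = c w then 1 else 0))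
      = ((G.neighborFinset v).filter (fun u => c u = c v)).card := by
    rw [Finset.card_filter]
    have step : ∀ w : V, (if v ∈ G.neighborFinset w ∧ c v = c w then 1 else 0)
        = if w ∈ G.neighborFinset v then (if c w = c v then (1:ℕ) else 0) else 0 := by
      intro w
      by_cases h : w ∈ G.neighborFinset v
      · have h' : v ∈ G.neighborFinset w := by
          rw [SimpleGraph.mem_neighborFinset] at h ⊢
          exact h.symm
        by_cases hc' : c w = c v
        · rw [if_pos ⟨h', hc'.symm⟩, if_pos h, if_pos hc']
        · have hvw : ¬ c v = c w := fun e => hc' e.symm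
          rw [if_neg (fun a => hvw a.2), if_pos h, if_neg hc']
      · have h' : v ∉ G.neighborFinset w := by
          rw [SimpleGraph.mem_neighborFinset] at h ⊢
          exact fun a => h a.symm
        simp [h, h']
    rw [Finset.sum_congr rfl fun w _ => step w, Finset.sum_ite_mem,
      Finset.univ_inter]
  have h3 : (∑ w, (((G.neighborFinset w).erase v).filter (fun u => c u = c w)).card)
      = (((G.neighborFinset v).erase v).filter (fun u => c u = c v)).card
        + ∑ w ∈ univ.erase v,
            (((G.neighborFinset w).erase v).filter (fun u => c u = c w)).card := by
    exact (Finset.add_sum_erase _ _ (mem_univ v)).symm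
  have h4 : (G.neighborFinset v).erase v = G.neighborFinset v :=
    Finset.erase_eq_of_notMem (G.notMem_neighborFinset_self v)
  rw [h1, h2, h3, h4]
  omega

theorem exists_integrated_three_coloring
    (V : Type) [Fintype V] [DecidableEq V]
    (G : SimpleGraph V) [DecidableRel G.Adj] :
    ∃ c : V → Fin 3, ∀ v : V,
      (((G.neighborFinset v).filter (fun u => c u = c v)).card : ℝ)
        ≤ (1 / 3) * G.degree v ∧
      (((G.neighborFinset v).filter (fun u => c u = c v)).card : ℝ)
        ≤ (1 / 2) * G.degree v := by
  classical
  obtain ⟨c, -, hc⟩ := Finset.exists_min_image (univ : Finset (V → Fin 3))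
    (fun c => ∑ w, ((G.neighborFinset w).filter (fun u => c u = c w)).card)
    ⟨fun _ => 0, mem_univ _⟩
  refine ⟨c, fun v => ?_⟩
  have hkey : ∀ k : Fin 3,
      ((G.neighborFinset v).filter (fun u => c u = c v)).card
        ≤ ((G.neighborFinset v).filter (fun u => c u = k)).card := by
    intro k
    have hmin := hc (Function.update c v k) (mem_univ _)
    rw [phi_decomp G c v, phi_decomp G (Function.update c v k) v] at hmin
    have hR : (∑ w ∈ univ.erase v, (((G.neighborFinset w).erase v).filter
          (fun u => Function.update c v k u = Function.update c v k w)).card)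
        = ∑ w ∈ univ.erase v, (((G.neighborFinset w).erase v).filter
          (fun u => c u = c w)).card := by
      refine Finset.sum_congr rfl fun w hw => ?_
      congr 1
      refine Finset.filter_congr fun u hu => ?_
      rw [Function.update_of_ne (Finset.ne_of_mem_erase hu),
          Function.update_of_ne (Finset.ne_of_mem_erase hw)]
    have hn : ((G.neighborFinset v).filter
          (fun u => Function.update c v k u = Function.update c v k v)).card
        = ((G.neighborFinset v).filter (fun u => c u = k)).card := by
      congr 1
      refine Finset.filter_congr fun u hu => ?_
      have huv : u ≠ v :=
        (G.ne_of_adj ((SimpleGraph.mem_neighborFinset _ _ _).mp hu)).symm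
      rw [Function.update_of_ne huv, Function.update_self]
    rw [hR, hn] at hmin
    omega
  have hsum : G.degree v
      = ∑ k : Fin 3, ((G.neighborFinset v).filter (fun u => c u = k)).card := by
    rw [← SimpleGraph.card_neighborFinset_eq_degree]
    exact Finset.card_eq_sum_card_fiberwise (fun u _ => mem_univ (c u))
  have h3 : 3 * ((G.neighborFinset v).filter (fun u => c u = c v)).card
      ≤ G.degree v := by
    rw [hsum]
    calc 3 * ((G.neighborFinset v).filter (fun u => c u = c v)).card
        = ∑ _k : Fin 3, ((G.neighborFinset v).filter (fun u => c u = c v)).card := by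
          simp [Finset.sum_const, mul_comm]
      _ ≤ _ := Finset.sum_le_sum fun k _ => hkey k
  have hd : (0:ℝ) ≤ (G.degree v : ℝ) := Nat.cast_nonneg _
  have h3' : (3:ℝ) * (((G.neighborFinset v).filter (fun u => c u = c v)).card : ℝ)
      ≤ (G.degree v : ℝ) := by exact_mod_cast h3
  constructor <;> linarith
end
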